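/- Let $\mathcal{O} \subset \mathbb{R}^d$ be an open set such that for every $X \in \mathcal{O}$, $|B_\varepsilon(X) \cap \mathcal{O}| \geq c |B_\varepsilon(X)|$ for some constant $c > 0$. Then for any locally $L^2$ function $f$ and any $1 \le p \le 2$, one has $\|f\|_{L^p(\mathcal{O})} \leq C \|M_\varepsilon(f)\|_{L^p(\mathcal{O})}$, where the constant $C$ depends only on $d$, $p$, and $c$. -/

import Mathlib

/-!
Put `q = p.toReal ∈ (0, 2]`. Because `y ∈ B_ε(x) ↔ x ∈ B_ε(y)`, Fubini gives
`∫_O |B_ε(y) ∩ O| h(y) dy = ∫_O ∫_{B_ε(x) ∩ O} h`, so the density condition yields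
`c ∫_O h ≤ ∫_O ⨍_{B_ε(x)} h` for every `h ≥ 0`. With `h = |f|^q`, the power-mean inequality
`⨍ |f|^q ≤ (⨍ |f|²)^{q/2} = M_ε(f)^q` (this is where `q ≤ 2` enters) gives
`∫_O |f|^q ≤ c⁻¹ ∫_O M_ε(f)^q`, i.e. the claim with `C = c^{-1/q}`.
-/

open MeasureTheory Metric Set ENNReal

/-- The ε-scale L² average operator `M_ε(f)(X) = (⨍_{B_ε(X)} |f|²)^{1/2}`. -/
noncomputable def Mavg {d : ℕ} (t : ℝ) (f : EuclideanSpace ℝ (Fin d) → ℝ)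
    (X : EuclideanSpace ℝ (Fin d)) : ℝ :=
  (⨍ Y in ball X t, (f Y) ^ 2) ^ (1 / 2 : ℝ)

namespace MeasureTheory

variable {α : Type*} [MeasurableSpace α] {μ : Measure α}

theorem setLAverage_rpow_le_setLAverage_rpow_rpow {s : Set α} {g : α → ℝ≥0∞} {q r : ℝ}
    (hq : 0 < q) (hqr : q ≤ r) (hs : μ s ≠ ∞) (hg : AEMeasurable g (μ.restrict s)) :
    ⨍⁻ x in s, g x ^ q ∂μ ≤ (⨍⁻ x in s, g x ^ r ∂μ) ^ (q / r) := by
  rcases eq_or_ne (μ s) 0 with hs0 | hs0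
  · simp [Measure.restrict_eq_zero.2 hs0]
  have : IsProbabilityMeasure ((μ s)⁻¹ • μ.restrict s) :=
    ProbabilityTheory.cond_isProbabilityMeasure_of_finite hs0 hs
  have hmono := eLpNorm'_le_eLpNorm'_of_exponent_le hq hqr ((μ s)⁻¹ • μ.restrict s)
    (hg.smul_measure _).aestronglyMeasurable
  simp only [eLpNorm'_eq_lintegral_enorm, enorm_eq_self] at hmono
  rw [setLAverage_eq', setLAverage_eq']
  calc ∫⁻ x, g x ^ q ∂(μ s)⁻¹ • μ.restrict s
      = ((∫⁻ x, g x ^ q ∂(μ s)⁻¹ • μ.restrict s) ^ (1 / q)) ^ q := by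
        rw [← ENNReal.rpow_mul, one_div_mul_cancel hq.ne', ENNReal.rpow_one]
    _ ≤ ((∫⁻ x, g x ^ r ∂(μ s)⁻¹ • μ.restrict s) ^ (1 / r)) ^ q := by gcongr
    _ = _ := by rw [← ENNReal.rpow_mul, one_div_mul_eq_div]

theorem setLIntegral_setLIntegral_ball_inter [PseudoMetricSpace α] [SecondCountableTopology α]
    [OpensMeasurableSpace α] [SFinite μ] (O : Set α) (ε : ℝ) {h : α → ℝ≥0∞}
    (hh : AEMeasurable h (μ.restrict O)) :
    ∫⁻ x in O, ∫⁻ y in ball x ε ∩ O, h y ∂μ ∂μ = ∫⁻ y in O, μ (ball y ε ∩ O) * h y ∂μ := by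
  have hF : AEMeasurable (Function.uncurry fun x y => (ball x ε).indicator h y)
      ((μ.restrict O).prod (μ.restrict O)) := by
    have hrel : MeasurableSet {z : α × α | z.2 ∈ ball z.1 ε} :=
      measurableSet_lt (measurable_snd.dist measurable_fst) measurable_const
    exact ((hh.comp_snd (μ := μ.restrict O)).indicator hrel).congr (ae_of_all _ fun _ => rfl)
  calc ∫⁻ x in O, ∫⁻ y in ball x ε ∩ O, h y ∂μ ∂μ
      = ∫⁻ x in O, ∫⁻ y in O, (ball x ε).indicator h y ∂μ ∂μ := by
        refine lintegral_congr fun x => ?_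
        rw [lintegral_indicator measurableSet_ball, Measure.restrict_restrict measurableSet_ball]
    _ = ∫⁻ y in O, ∫⁻ x in O, (ball y ε).indicator (fun _ => h y) x ∂μ ∂μ := by
        rw [lintegral_lintegral_swap hF]
        refine lintegral_congr fun y => lintegral_congr fun x => ?_
        simp only [Set.indicator, mem_ball, dist_comm]
    _ = ∫⁻ y in O, μ (ball y ε ∩ O) * h y ∂μ := by
        refine lintegral_congr fun y => ?_
        rw [lintegral_indicator_const measurableSet_ball, Measure.restrict_apply measurableSet_ball,
          mul_comm]

theorem mul_setLIntegral_le_setLIntegral_setLAverage_ball {E : Type*} [NormedAddCommGroup E]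
    [NormedSpace ℝ E] [FiniteDimensional ℝ E] [MeasurableSpace E] [BorelSpace E]
    (μ : Measure E) [μ.IsAddHaarMeasure] {O : Set E} (hO : MeasurableSet O) {ε : ℝ}
    (hε : 0 < ε) {c : ℝ≥0∞} (hdens : ∀ x ∈ O, c * μ (ball x ε) ≤ μ (ball x ε ∩ O))
    {h : E → ℝ≥0∞} (hh : AEMeasurable h (μ.restrict O)) :
    c * ∫⁻ y in O, h y ∂μ ≤ ∫⁻ x in O, ⨍⁻ y in ball x ε, h y ∂μ ∂μ := by
  set V := μ (ball 0 ε)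
  have hV : ∀ x, μ (ball x ε) = V := fun x => μ.addHaar_ball_center x ε
  have hV0 : V ≠ 0 := (measure_ball_pos μ 0 hε).ne'
  have hVtop : V ≠ ∞ := measure_ball_lt_top.ne
  refine (ENNReal.mul_le_mul_iff_right hV0 hVtop).mp ?_
  calc V * (c * ∫⁻ y in O, h y ∂μ)
      = ∫⁻ y in O, c * μ (ball y ε) * h y ∂μ := by
        simp_rw [hV, lintegral_const_mul'' _ hh]
        ring
    _ ≤ ∫⁻ y in O, μ (ball y ε ∩ O) * h y ∂μ :=
        setLIntegral_mono' hO fun y hy => by gcongr; exact hdens y hy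
    _ = ∫⁻ x in O, ∫⁻ y in ball x ε ∩ O, h y ∂μ ∂μ :=
        (setLIntegral_setLIntegral_ball_inter O ε hh).symm
    _ ≤ ∫⁻ x in O, ∫⁻ y in ball x ε, h y ∂μ ∂μ :=
        lintegral_mono fun x => lintegral_mono_set inter_subset_left
    _ = V * ∫⁻ x in O, ⨍⁻ y in ball x ε, h y ∂μ ∂μ := by
        rw [← lintegral_const_mul' _ _ hVtop]
        refine lintegral_congr fun x => ?_
        rw [← hV x, measure_mul_setLAverage _ measure_ball_lt_top.ne]

theorem eLpNorm_le_mul_eLpNorm_of_lintegral_rpow_le {ε ε' : Type*} [ENorm ε] [ENorm ε']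
    {f : α → ε} {g : α → ε'} {p : ℝ≥0∞} (hp0 : p ≠ 0) (hptop : p ≠ ∞) {K : ℝ≥0∞}
    (h : ∫⁻ x, ‖f x‖ₑ ^ p.toReal ∂μ ≤ K ^ p.toReal * ∫⁻ x, ‖g x‖ₑ ^ p.toReal ∂μ) :
    eLpNorm f p μ ≤ K * eLpNorm g p μ := by
  have hq : 0 < p.toReal := toReal_pos hp0 hptop
  rw [eLpNorm_eq_lintegral_rpow_enorm_toReal hp0 hptop,
    eLpNorm_eq_lintegral_rpow_enorm_toReal hp0 hptop]
  calc (∫⁻ x, ‖f x‖ₑ ^ p.toReal ∂μ) ^ (1 / p.toReal)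
      ≤ (K ^ p.toReal * ∫⁻ x, ‖g x‖ₑ ^ p.toReal ∂μ) ^ (1 / p.toReal) := by gcongr
    _ = K * (∫⁻ x, ‖g x‖ₑ ^ p.toReal ∂μ) ^ (1 / p.toReal) := by
      rw [ENNReal.mul_rpow_of_nonneg _ _ (by positivity), ← ENNReal.rpow_mul,
        mul_one_div_cancel hq.ne', ENNReal.rpow_one]

end MeasureTheory

theorem enorm_Mavg {d : ℕ} {t : ℝ} {f : EuclideanSpace ℝ (Fin d) → ℝ}
    {X : EuclideanSpace ℝ (Fin d)} (hf : IntegrableOn (fun Y => f Y ^ 2) (ball X t)) :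
    ‖Mavg t f X‖ₑ = (⨍⁻ Y in ball X t, ‖f Y‖ₑ ^ (2 : ℝ) ∂volume) ^ (1 / 2 : ℝ) := by
  have havg : 0 ≤ ⨍ Y in ball X t, f Y ^ 2 := by
    rw [setAverage_eq]
    exact smul_nonneg (inv_nonneg.2 measureReal_nonneg) (integral_nonneg fun Y => sq_nonneg _)
  rw [Mavg, Real.enorm_eq_ofReal (Real.rpow_nonneg havg _),
    ← ENNReal.ofReal_rpow_of_nonneg havg (by norm_num),
    ofReal_setAverage hf (ae_of_all _ fun Y => sq_nonneg _), setLAverage_eq]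
  congr 3 with Y
  rw [ENNReal.rpow_two, Real.enorm_eq_ofReal_abs, ← ofReal_pow (abs_nonneg _), sq_abs]

theorem stmt0_general (d : ℕ) (p : ℝ≥0∞) (hp2 : p ≤ 2) (c : ℝ) (hc : 0 < c) :
    ∃ C : ℝ, 0 < C ∧
      ∀ (O : Set (EuclideanSpace ℝ (Fin d))), IsOpen O →
      ∀ ε : ℝ, 0 < ε →
      (∀ X ∈ O, ENNReal.ofReal c * volume (ball X ε) ≤ volume (ball X ε ∩ O)) →
      ∀ f : EuclideanSpace ℝ (Fin d) → ℝ,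
        LocallyIntegrable (fun Y => (f Y) ^ 2) volume →
        eLpNorm f p (volume.restrict O) ≤
          ENNReal.ofReal C * eLpNorm (Mavg ε f) p (volume.restrict O) := by
  rcases eq_or_ne p 0 with rfl | hp0
  · exact ⟨1, one_pos, fun _ _ _ _ _ _ _ => by simp⟩
  have hptop : p ≠ ∞ := ne_top_of_le_ne_top ofNat_ne_top hp2
  set q := p.toReal
  have hq : 0 < q := toReal_pos hp0 hptop
  have hq2 : q ≤ 2 := by simpa using toReal_mono ofNat_ne_top hp2
  refine ⟨c⁻¹ ^ q⁻¹, by positivity, fun O hO ε hε hdens f hf => ?_⟩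
  -- `f` itself need not be measurable, but `‖f‖ₑ = ‖f ^ 2‖ₑ ^ (1 / 2)` is.
  have hfm : AEMeasurable (fun Y => ‖f Y‖ₑ) volume :=
    (hf.aestronglyMeasurable.enorm.pow_const (1 / 2 : ℝ)).congr <| ae_of_all _ fun Y => by
      dsimp only
      rw [enorm_pow, ← rpow_natCast, ← rpow_mul]
      norm_num
  have hC : ENNReal.ofReal (c⁻¹ ^ q⁻¹) ^ q = (ENNReal.ofReal c)⁻¹ := by
    rw [ofReal_rpow_of_nonneg (by positivity) hq.le, ← Real.rpow_mul (by positivity),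
      inv_mul_cancel₀ hq.ne', Real.rpow_one, ofReal_inv_of_pos hc]
  refine eLpNorm_le_mul_eLpNorm_of_lintegral_rpow_le hp0 hptop ?_
  rw [hC, ← mul_le_iff_le_inv (ofReal_pos.2 hc).ne' ofReal_ne_top]
  calc ENNReal.ofReal c * ∫⁻ Y in O, ‖f Y‖ₑ ^ q
      ≤ ∫⁻ X in O, ⨍⁻ Y in ball X ε, ‖f Y‖ₑ ^ q ∂volume :=
        mul_setLIntegral_le_setLIntegral_setLAverage_ball volume hO.measurableSet hε hdens
          (hfm.pow_const q).restrict
    _ ≤ ∫⁻ X in O, ‖Mavg ε f X‖ₑ ^ q := lintegral_mono fun X => by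
        rw [enorm_Mavg ((hf.integrableOn_isCompact (isCompact_closedBall X ε)).mono_set
          ball_subset_closedBall), ← rpow_mul, one_div_mul_eq_div]
        exact setLAverage_rpow_le_setLAverage_rpow_rpow hq hq2 measure_ball_lt_top.ne hfm.restrict

/-- If the open set `O` has interior measure density `c` at scale `ε`, then
`‖f‖_{L^p(O)} ≤ C ‖M_ε f‖_{L^p(O)}` for `1 ≤ p ≤ 2`, with `C = C(d, p, c)`. -/
theorem stmt0 (d : ℕ) (p : ℝ≥0∞) (hp1 : 1 ≤ p) (hp2 : p ≤ 2) (c : ℝ) (hc : 0 < c) :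
    ∃ C : ℝ, 0 < C ∧
      ∀ (O : Set (EuclideanSpace ℝ (Fin d))), IsOpen O →
      ∀ ε : ℝ, 0 < ε →
      (∀ X ∈ O, ENNReal.ofReal c * volume (ball X ε) ≤ volume (ball X ε ∩ O)) →
      ∀ f : EuclideanSpace ℝ (Fin d) → ℝ,
        LocallyIntegrable (fun Y => (f Y) ^ 2) volume →
        eLpNorm f p (volume.restrict O) ≤
          ENNReal.ofReal C * eLpNorm (Mavg ε f) p (volume.restrict O) :=
  stmt0_general d p hp2 c hc
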